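/- arXiv:1205.0357 — 2 statements merged into one kernel-verified Lean document; each statement's English description precedes it below -/
import Mathlib

section
/- A Δ-homomorphism φ : g →_Δ h between term graphs is rigid if and only if for every position π of g with g(π) ∉ Δ and every acyclic position π' of h, π ∼_h π' implies π ∼_g π'. -/
set_option autoImplicit false

namespace TGR

/-- A signature: a type of symbols, each with a finite arity. -/
structure Signature where
  Sym : Type
  ar : Sym → ℕ

/-- The signature `Σ_⊥`: `Σ` extended by a fresh nullary symbol `⊥` (here `none`). -/
def Signature.bot (S : Signature) : Signature where
  Sym := Option S.Sym
  ar := fun o => match o with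
    | none => 0
    | some f => S.ar f

/-- A rooted graph over a signature `S` with nodes `N`: a labelling, a successor
function respecting arities, and a root node. -/
structure TermGraph (S : Signature) (N : Type) where
  lab : N → S.Sym
  suc : (n : N) → Fin (S.ar (lab n)) → N
  root : N

namespace TermGraph

variable {S : Signature} {N M K : Type}

/-- `g.IsPos π n`: `π` is a position (path of successor indices from the root) of node `n`. -/
inductive IsPos (g : TermGraph S N) : List ℕ → N → Prop
  | root : IsPos g [] g.root
  | step {π : List ℕ} {n : N} (h : IsPos g π n) (i : Fin (S.ar (g.lab n))) :
      IsPos g (π ++ [(i : ℕ)]) (g.suc n i)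

/-- All nodes are reachable from the root. -/
def Reachable (g : TermGraph S N) : Prop :=
  ∀ n : N, ∃ π : List ℕ, g.IsPos π n

/-- The set of positions of `g`. -/
def pos (g : TermGraph S N) : Set (List ℕ) :=
  {π | ∃ n : N, g.IsPos π n}

/-- The set of positions of node `n` in `g`. -/
def nodePos (g : TermGraph S N) (n : N) : Set (List ℕ) :=
  {π | g.IsPos π n}

/-- `π ∼_g π'`: `π` and `π'` are positions of the same node. -/
def Aliases (g : TermGraph S N) (π π' : List ℕ) : Prop :=
  ∃ n : N, g.IsPos π n ∧ g.IsPos π' n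

/-- A position is acyclic if it passes no node twice. -/
def IsAcyclicPos (g : TermGraph S N) (π : List ℕ) : Prop :=
  ∀ (π₁ π₂ : List ℕ) (n : N), π₁ <+: π₂ → π₂ <+: π →
    g.IsPos π₁ n → g.IsPos π₂ n → π₁ = π₂

/-- The set of acyclic positions of node `n` in `g`. -/
def nodePosAcy (g : TermGraph S N) (n : N) : Set (List ℕ) :=
  {π | g.IsPos π n ∧ g.IsAcyclicPos π}

/-- The set of acyclic positions of `g`. -/
def posAcy (g : TermGraph S N) : Set (List ℕ) :=
  {π | (∃ n : N, g.IsPos π n) ∧ g.IsAcyclicPos π}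

/-- The depth of a node: the minimal length of its positions. -/
noncomputable def depth (g : TermGraph S N) (n : N) : ℕ :=
  sInf {k : ℕ | ∃ π : List ℕ, g.IsPos π n ∧ π.length = k}

open Classical in
/-- The (unique) node at a position. -/
noncomputable def nodeAt (g : TermGraph S N) (π : List ℕ) : N :=
  if h : ∃ n : N, g.IsPos π n then h.choose else g.root

/-- The label `g(π)` at a position. -/
noncomputable def labAt (g : TermGraph S N) (π : List ℕ) : S.Sym :=
  g.lab (g.nodeAt π)

/-- `Δ`-homomorphism: root, labelling and successor conditions, the latter two
suspended on `Δ`-labelled nodes. -/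
structure IsDHom (Δ : Set S.Sym) (g : TermGraph S N) (h : TermGraph S M)
    (φ : N → M) : Prop where
  root_eq : φ g.root = h.root
  lab_eq : ∀ n : N, g.lab n ∉ Δ → h.lab (φ n) = g.lab n
  suc_eq : ∀ n : N, g.lab n ∉ Δ → ∀ (i : ℕ) (hi : i < S.ar (g.lab n))
      (hi' : i < S.ar (h.lab (φ n))),
      φ (g.suc n ⟨i, hi⟩) = h.suc (φ n) ⟨i, hi'⟩

/-- Rigidity: `Pa_g(n) = Pa_h(φ n)` for all non-`Δ`-labelled nodes `n`. -/
def IsRigid (Δ : Set S.Sym) (g : TermGraph S N) (h : TermGraph S M)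
    (φ : N → M) : Prop :=
  ∀ n : N, g.lab n ∉ Δ → g.nodePosAcy n = h.nodePosAcy (φ n)

/-- Rigid `Δ`-homomorphism. -/
def IsRigidDHom (Δ : Set S.Sym) (g : TermGraph S N) (h : TermGraph S M)
    (φ : N → M) : Prop :=
  IsDHom Δ g h φ ∧ IsRigid Δ g h φ

/-- Isomorphism of term graphs: a homomorphism with an inverse homomorphism. -/
def Iso (g : TermGraph S N) (h : TermGraph S M) : Prop :=
  ∃ (φ : N → M) (ψ : M → N), IsDHom ∅ g h φ ∧ IsDHom ∅ h g ψ ∧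
    (∀ n : N, ψ (φ n) = n) ∧ (∀ m : M, φ (ψ m) = m)

/-- A partial term graph (over `Σ_⊥`) is total if no node is labelled `⊥`. -/
def Total (g : TermGraph S.bot N) : Prop := ∀ n : N, g.lab n ≠ none

/-- Rigid `⊥`-homomorphism between partial term graphs. -/
def IsRigidBotHom (g : TermGraph S.bot N) (h : TermGraph S.bot M)
    (φ : N → M) : Prop :=
  IsRigidDHom ({none} : Set (Option S.Sym)) g h φ

/-- The `⊥`-depth of a partial term graph: the minimal depth of a `⊥`-labelled
node, `ω` (`⊤`) if there is none. -/
noncomputable def botDepth (g : TermGraph S.bot N) : ℕ∞ :=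
  sInf {d : ℕ∞ | ∃ n : N, g.lab n = none ∧ (g.depth n : ℕ∞) = d}

/-- `m` is an acyclic predecessor of `n`: some acyclic position `π ++ [i]` of `n`
has `π` a position of `m`. -/
def acyPred (g : TermGraph S N) (n : N) : Set N :=
  {m | ∃ (π : List ℕ) (i : ℕ), (π ++ [i]) ∈ g.nodePosAcy n ∧ g.IsPos π m}

/-- Retained nodes of the truncation at depth `d`: the least set of nodes
containing all nodes of depth `< d` and closed under acyclic predecessors. -/
inductive Retained (g : TermGraph S N) (d : ℕ) : N → Prop
  | shallow {n : N} : g.depth n < d → Retained g d n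
  | pred {n m : N} : Retained g d n → m ∈ g.acyPred n → Retained g d m

theorem not_retained_zero {g : TermGraph S N} (n : N) : ¬ g.Retained 0 n := by
  intro h
  induction h with
  | shallow hd => exact Nat.not_lt_zero _ hd
  | pred _ _ ih => exact ih

/-- Fringe nodes of the truncation at depth `d` (a pair `(n, i)` stands for the
fresh node `n^i`); at depth `0` the fringe is just (a copy of) the root. -/
def IsFringe (g : TermGraph S.bot N) (d : ℕ) (p : N × ℕ) : Prop :=
  if d = 0 then p = (g.root, 0)
  else g.Retained d p.1 ∧ ∃ h : p.2 < S.bot.ar (g.lab p.1),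
    (¬ g.Retained d (g.suc p.1 ⟨p.2, h⟩) ∨
      (d - 1 ≤ g.depth p.1 ∧ p.1 ∉ g.acyPred (g.suc p.1 ⟨p.2, h⟩)))

/-- The node set of the rigid truncation: retained nodes plus fringe nodes. -/
def TNode (g : TermGraph S.bot N) (d : ℕ) : Type :=
  {x : N ⊕ (N × ℕ) // Sum.elim (g.Retained d) (g.IsFringe d) x}

def truncLab (g : TermGraph S.bot N) (d : ℕ) (x : TNode g d) : S.bot.Sym :=
  Sum.elim (fun n => g.lab n) (fun _ => none) x.1

open Classical in
noncomputable def truncSuc (g : TermGraph S.bot N) (d : ℕ) :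
    (x : TNode g d) → Fin (S.bot.ar (truncLab g d x)) → TNode g d
  | ⟨Sum.inl n, hn⟩ => fun i =>
      if hf : g.IsFringe d (n, (i : ℕ)) then ⟨Sum.inr (n, (i : ℕ)), hf⟩
      else
        ⟨Sum.inl (g.suc n ⟨(i : ℕ), i.isLt⟩), by
          show g.Retained d (g.suc n ⟨(i : ℕ), i.isLt⟩)
          rcases Nat.eq_zero_or_pos d with hd | hd
          · subst hd
            exact ((not_retained_zero n) hn).elim
          · by_contra hc
            apply hf
            show g.IsFringe d (n, (i : ℕ))
            unfold IsFringe
            rw [if_neg (Nat.pos_iff_ne_zero.mp hd)]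
            exact ⟨hn, i.isLt, Or.inl hc⟩⟩
  | ⟨Sum.inr p, hp⟩ => fun i => absurd i.isLt (Nat.not_lt_zero _)

noncomputable def truncRoot (g : TermGraph S.bot N) (d : ℕ) : TNode g d :=
  if hd : d = 0 then
    ⟨Sum.inr (g.root, 0), by
      subst hd
      show g.IsFringe 0 (g.root, 0)
      simp [IsFringe]⟩
  else
    ⟨Sum.inl g.root, by
      show g.Retained d g.root
      exact Retained.shallow (lt_of_le_of_lt
        (Nat.sInf_le ⟨[], IsPos.root, rfl⟩) (Nat.pos_of_ne_zero hd))⟩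

/-- The rigid truncation `g†d` of a partial term graph at finite depth `d`. -/
noncomputable def trunc (g : TermGraph S.bot N) (d : ℕ) :
    TermGraph S.bot (TNode g d) where
  lab := truncLab g d
  suc := truncSuc g d
  root := truncRoot g d

end TermGraph

/-- A canonical term graph: a term graph whose nodes are sets of positions,
each node being exactly its set of positions, with all nodes reachable. -/
structure CTG (S : Signature) where
  nodes : Set (Set (List ℕ))
  tg : TermGraph S ↥nodes
  reach : tg.Reachable
  canon : ∀ n : ↥nodes, (n : Set (List ℕ)) = tg.nodePos n

namespace CTG

variable {S : Signature}

def pos (g : CTG S) : Set (List ℕ) := g.tg.pos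
def Aliases (g : CTG S) : List ℕ → List ℕ → Prop := g.tg.Aliases
def posAcy (g : CTG S) : Set (List ℕ) := g.tg.posAcy
noncomputable def labAt (g : CTG S) : List ℕ → S.Sym := g.tg.labAt

/-- A canonical partial term graph is total if it has no `⊥`-labelled node. -/
def Total (g : CTG S.bot) : Prop := g.tg.Total

/-- The rigid partial order `g ≤⊥r h`: there is a rigid `⊥`-homomorphism
from `g` to `h`. -/
def LeR (g h : CTG S.bot) : Prop :=
  ∃ φ, TermGraph.IsRigidBotHom g.tg h.tg φ

noncomputable def botDepth (g : CTG S.bot) : ℕ∞ := g.tg.botDepth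

/-- `TruncIso g h d`: the rigid truncations of `g` and `h` at depth `d ≤ ω`
are isomorphic (`g†ω = g`). -/
def TruncIso {N M : Type} (g : TermGraph S.bot N) (h : TermGraph S.bot M)
    (d : ℕ∞) : Prop :=
  (d = ⊤ → TermGraph.Iso g h) ∧
  ∀ k : ℕ, d = (k : ℕ∞) → TermGraph.Iso (g.trunc k) (h.trunc k)

/-- The rigid similarity `sim†(g,h)`: the maximal `d ≤ ω` such that
`g†d ≅ h†d`. -/
noncomputable def simr (g h : CTG S.bot) : ℕ∞ :=
  sSup {d : ℕ∞ | TruncIso g.tg h.tg d}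

open Classical in
/-- The rigid distance `d†(g,h) = 2^{-sim†(g,h)}` (with `2^{-ω} = 0`). -/
noncomputable def rdist (g h : CTG S.bot) : ℝ :=
  if simr g h = ⊤ then 0 else (1 / 2 : ℝ) ^ (simr g h).toNat

def IsUB (A : Set (CTG S.bot)) (u : CTG S.bot) : Prop := ∀ g ∈ A, LeR g u

def IsLubR (A : Set (CTG S.bot)) (u : CTG S.bot) : Prop :=
  IsUB A u ∧ ∀ v, IsUB A v → LeR u v

def IsLB (A : Set (CTG S.bot)) (l : CTG S.bot) : Prop := ∀ g ∈ A, LeR l g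

def IsGlbR (A : Set (CTG S.bot)) (l : CTG S.bot) : Prop :=
  IsLB A l ∧ ∀ m, IsLB A m → LeR m l

/-- A directed set: non-empty and every two elements have an upper bound inside. -/
def DirectedR (A : Set (CTG S.bot)) : Prop :=
  A.Nonempty ∧ ∀ g ∈ A, ∀ h ∈ A, ∃ u ∈ A, LeR g u ∧ LeR h u

/-- `L` is the limit inferior `⨆_{β<α} ⨅_{β≤ι<α} f ι` of the ordinal-indexed
sequence `(f ι)_{ι<α}` in the rigid partial order. -/
def IsLiminfR (α : Ordinal.{0}) (f : Ordinal.{0} → CTG S.bot) (L : CTG S.bot) : Prop :=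
  ∃ inf : Ordinal.{0} → CTG S.bot,
    (∀ β < α, IsGlbR {g | ∃ ι, β ≤ ι ∧ ι < α ∧ g = f ι} (inf β)) ∧
    IsLubR {g | ∃ β < α, g = inf β} L

/-- Cauchy condition for an ordinal-indexed sequence w.r.t. the rigid distance. -/
def OrdCauchy (α : Ordinal.{0}) (f : Ordinal.{0} → CTG S.bot) : Prop :=
  ∀ ε : ℝ, 0 < ε → ∃ β < α, ∀ ι ι' : Ordinal.{0},
    β < ι → ι < ι' → ι' < α → rdist (f ι) (f ι') < ε

/-- Convergence of an ordinal-indexed sequence to `g` w.r.t. the rigid distance. -/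
def OrdTendsto (α : Ordinal.{0}) (f : Ordinal.{0} → CTG S.bot) (g : CTG S.bot) : Prop :=
  ∀ ε : ℝ, 0 < ε → ∃ β < α, ∀ ι : Ordinal.{0}, β < ι → ι < α → rdist (f ι) g < ε

/-- `u` is the unravelling of `g`: the term tree with the same positions and
labels as `g` and trivial aliasing. -/
def IsUnravelling (g u : CTG S) : Prop :=
  u.pos = g.pos ∧ (∀ π ∈ g.pos, u.labAt π = g.labAt π) ∧
  (∀ π π' : List ℕ, u.Aliases π π' ↔ (π ∈ g.pos ∧ π = π'))

end CTG

/-- A labelled quotient tree over a signature `S`. -/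
structure LQT (S : Signature) where
  P : Set (List ℕ)
  nonempty : P.Nonempty
  l : List ℕ → S.Sym
  rel : List ℕ → List ℕ → Prop
  rel_refl : ∀ π ∈ P, rel π π
  rel_symm : ∀ π π' : List ℕ, rel π π' → rel π' π
  rel_trans : ∀ π π' π'' : List ℕ, rel π π' → rel π' π'' → rel π π''
  rel_mem : ∀ π π' : List ℕ, rel π π' → π ∈ P ∧ π' ∈ P
  reach_mem : ∀ (π : List ℕ) (i : ℕ), π ++ [i] ∈ P → π ∈ P
  reach_ar : ∀ (π : List ℕ) (i : ℕ), π ++ [i] ∈ P → i < S.ar (l π)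
  congr_lab : ∀ π π' : List ℕ, rel π π' → l π = l π'
  congr_suc : ∀ (π π' : List ℕ) (i : ℕ), rel π π' → i < S.ar (l π) →
    rel (π ++ [i]) (π' ++ [i])

end TGR

namespace TGR
namespace Aux

open TermGraph

variable {S : Signature} {N M : Type}

lemma isPos_cases {g : TermGraph S N} {π : List ℕ} {n : N} (h : g.IsPos π n) :
    (π = [] ∧ n = g.root) ∨
    ∃ (π' : List ℕ) (n' : N) (i : Fin (S.ar (g.lab n'))),
      π = π' ++ [(i : ℕ)] ∧ g.IsPos π' n' ∧ n = g.suc n' i := by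
  cases h with
  | root => exact Or.inl ⟨rfl, rfl⟩
  | step h i => exact Or.inr ⟨_, _, i, rfl, h, rfl⟩

lemma isPos_unique {g : TermGraph S N} {π : List ℕ} {n m : N}
    (h1 : g.IsPos π n) (h2 : g.IsPos π m) : n = m := by
  induction h1 generalizing m with
  | root =>
    rcases isPos_cases h2 with ⟨_, rfl⟩ | ⟨π', n', i, heq, _, _⟩
    · rfl
    · exact absurd heq.symm (by simp)
  | @step π n hp i ih =>
    rcases isPos_cases h2 with ⟨heq, _⟩ | ⟨π', n', j, heq, hp', rfl⟩
    · exact absurd heq (by simp)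
    · obtain ⟨hπ, hij⟩ := List.append_inj' heq rfl
      subst hπ
      have hn : n = n' := ih hp'
      subst hn
      have hij' : (i : ℕ) = (j : ℕ) := by simpa using hij
      have : i = j := Fin.ext hij'
      subst this
      rfl

lemma isPos_prefix {g : TermGraph S N} {π ρ : List ℕ} {n : N}
    (h : g.IsPos π n) (hp : ρ <+: π) : ∃ m, g.IsPos ρ m := by
  induction h generalizing ρ with
  | root =>
    rw [List.prefix_nil.mp hp]
    exact ⟨_, IsPos.root⟩
  | @step π n hp i ih =>
    obtain ⟨t, ht⟩ := hp
    rcases List.eq_nil_or_concat t with rfl | ⟨t', a, rfl⟩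
    · rw [List.append_nil] at ht
      rw [ht]
      exact ⟨_, IsPos.step hp i⟩
    · rw [List.concat_eq_append, ← List.append_assoc] at ht
      obtain ⟨hπ, _⟩ := List.append_inj' ht rfl
      exact ih ⟨t', hπ⟩

lemma isPos_transplant {g : TermGraph S N} {π π' : List ℕ} (ρ : List ℕ) {m n : N}
    (hρ : g.IsPos (π ++ ρ) n) (h1 : g.IsPos π m) (h2 : g.IsPos π' m) :
    g.IsPos (π' ++ ρ) n := by
  induction ρ using List.reverseRecOn generalizing n with
  | nil =>
    rw [List.append_nil] at hρ ⊢
    rwa [isPos_unique hρ h1]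
  | append_singleton ρ a ih =>
    rw [← List.append_assoc] at hρ
    rcases isPos_cases hρ with ⟨heq, _⟩ | ⟨σ, n', i, heq, hp, rfl⟩
    · exact absurd heq (by simp)
    · obtain ⟨hπ, ha⟩ := List.append_inj' heq rfl
      have ha' : a = (i : ℕ) := by simpa using ha
      subst ha'
      rw [← List.append_assoc]
      exact IsPos.step (ih (hπ ▸ hp)) i

lemma exists_acyclic_pos {g : TermGraph S N} {π : List ℕ} {n : N} (h : g.IsPos π n) :
    ∃ π', g.IsPos π' n ∧ g.IsAcyclicPos π' := by
  suffices H : ∀ k (π : List ℕ) (n : N), π.length ≤ k → g.IsPos π n →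
      ∃ π', g.IsPos π' n ∧ g.IsAcyclicPos π' from H π.length π n le_rfl h
  intro k
  induction k with
  | zero =>
    intro π n hl hp
    have : π = [] := List.eq_nil_of_length_eq_zero (Nat.le_zero.mp hl)
    subst this
    refine ⟨[], hp, ?_⟩
    intro π₁ π₂ m h12 h2 _ _
    have h2' := List.prefix_nil.mp h2
    subst h2'
    exact List.prefix_nil.mp h12
  | succ k ih =>
    intro π n hl hp
    by_cases hacy : g.IsAcyclicPos π
    · exact ⟨π, hp, hacy⟩
    · unfold IsAcyclicPos at hacy
      push_neg at hacy
      obtain ⟨π₁, π₂, m, h12, h2π, hp1, hp2, hne⟩ := hacy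
      obtain ⟨t, rfl⟩ := h2π
      have hpos : g.IsPos (π₁ ++ t) n := isPos_transplant t hp hp2 hp1
      have hlt : π₁.length < π₂.length :=
        lt_of_le_of_ne h12.length_le (fun hlen => hne (h12.eq_of_length hlen))
      have : (π₁ ++ t).length ≤ k := by
        have := hl
        simp only [List.length_append] at this ⊢
        omega
      exact ih _ _ this hpos

lemma hom_isPos {Δ : Set S.Sym} (hΔ : ∀ f ∈ Δ, S.ar f = 0)
    {g : TermGraph S N} {h : TermGraph S M} {φ : N → M}
    (hφ : IsDHom Δ g h φ) {π : List ℕ} {n : N} (hp : g.IsPos π n) :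
    h.IsPos π (φ n) := by
  induction hp with
  | root => rw [hφ.root_eq]; exact IsPos.root
  | @step π n hp i ih =>
    by_cases hmem : g.lab n ∈ Δ
    · exact absurd (hΔ _ hmem)
        (Nat.pos_iff_ne_zero.mp (Nat.lt_of_le_of_lt (Nat.zero_le _) i.isLt))
    · have hi' : (i : ℕ) < S.ar (h.lab (φ n)) := by
        rw [hφ.lab_eq n hmem]; exact i.isLt
      have hsuc := hφ.suc_eq n hmem (i : ℕ) i.isLt hi'
      have : g.suc n ⟨(i : ℕ), i.isLt⟩ = g.suc n i := by simp
      rw [this] at hsuc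
      rw [hsuc]
      exact IsPos.step ih ⟨(i : ℕ), hi'⟩

lemma labAt_eq {g : TermGraph S N} {π : List ℕ} {n : N} (h : g.IsPos π n) :
    g.labAt π = g.lab n := by
  have hex : ∃ m, g.IsPos π m := ⟨n, h⟩
  show g.lab (g.nodeAt π) = g.lab n
  rw [TermGraph.nodeAt, dif_pos hex]
  exact congrArg g.lab (isPos_unique hex.choose_spec h)

lemma lab_notMem_of_strict_prefix {Δ : Set S.Sym} (hΔ : ∀ f ∈ Δ, S.ar f = 0)
    {g : TermGraph S N} {π ρ : List ℕ} {n m : N}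
    (hπ : g.IsPos π n) (hρ : g.IsPos ρ m) (hp : ρ <+: π) (hne : ρ ≠ π) :
    g.lab m ∉ Δ := by
  obtain ⟨t, rfl⟩ := hp
  cases t with
  | nil => simp at hne
  | cons a t =>
    have hpre : ρ ++ [a] <+: ρ ++ a :: t := ⟨t, by simp⟩
    obtain ⟨m', hm'⟩ := isPos_prefix hπ hpre
    rcases isPos_cases hm' with ⟨heq, _⟩ | ⟨σ, n', i, heq, hp', rfl⟩
    · exact absurd heq (by simp)
    · obtain ⟨hσ, _⟩ := List.append_inj' heq rfl
      subst hσ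
      have : n' = m := isPos_unique hp' hρ
      subst this
      intro hmem
      exact absurd (hΔ _ hmem)
        (Nat.pos_iff_ne_zero.mp (Nat.lt_of_le_of_lt (Nat.zero_le _) i.isLt))

lemma acy_preserved {Δ : Set S.Sym} (hΔ : ∀ f ∈ Δ, S.ar f = 0)
    {g : TermGraph S N} {h : TermGraph S M} {φ : N → M}
    (hφ : IsDHom Δ g h φ)
    (cond : ∀ π ∈ g.pos, g.labAt π ∉ Δ →
        ∀ π' ∈ h.posAcy, h.Aliases π π' → g.Aliases π π')
    {n : N} (hn : g.lab n ∉ Δ) {π : List ℕ}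
    (hπ : g.IsPos π n) (hacy : g.IsAcyclicPos π) : h.IsAcyclicPos π := by
  suffices H : ∀ k (ρ : List ℕ), ρ <+: π → ρ.length ≤ k → h.IsAcyclicPos ρ from
    H π.length π List.prefix_rfl le_rfl
  intro k
  induction k with
  | zero =>
    intro ρ _ hl
    have : ρ = [] := List.eq_nil_of_length_eq_zero (Nat.le_zero.mp hl)
    subst this
    intro π₁ π₂ m h12 h2 _ _
    have h2' : π₂ = [] := List.prefix_nil.mp h2
    subst h2'
    exact List.prefix_nil.mp h12
  | succ k ih =>
    intro ρ hρπ hl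
    intro π₁ π₂ m h12 h2ρ hp1 hp2
    by_cases hπ₂ : π₂ = ρ
    · subst hπ₂
      by_cases hπ₁ : π₁ = π₂
      · exact hπ₁
      · have hlt : π₁.length < π₂.length :=
          lt_of_le_of_ne h12.length_le (fun hlen => hπ₁ (h12.eq_of_length hlen))
        have hacy₁ : h.IsAcyclicPos π₁ := ih π₁ (h12.trans hρπ) (by omega)
        obtain ⟨ng, hng⟩ := isPos_prefix hπ hρπ
        have hlab : g.labAt π₂ ∉ Δ := by
          by_cases heq : π₂ = π
          · subst heq
            rw [labAt_eq hπ]; exact hn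
          · rw [labAt_eq hng]
            exact lab_notMem_of_strict_prefix hΔ hπ hng hρπ heq
        have hal : g.Aliases π₂ π₁ :=
          cond π₂ ⟨ng, hng⟩ hlab π₁ ⟨⟨m, hp1⟩, hacy₁⟩ ⟨m, hp2, hp1⟩
        obtain ⟨k', hk2, hk1⟩ := hal
        exact hacy π₁ π₂ k' h12 hρπ hk1 hk2
    · have hlt : π₂.length < ρ.length :=
        lt_of_le_of_ne h2ρ.length_le (fun hlen => hπ₂ (h2ρ.eq_of_length hlen))
      exact ih π₂ (h2ρ.trans hρπ) (by omega) π₁ π₂ m h12 List.prefix_rfl hp1 hp2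

end Aux
/-- A `Δ`-homomorphism `φ : g →_Δ h` is rigid iff for every
position `π` of `g` with `g(π) ∉ Δ` and every acyclic position `π'` of `h`,
`π ∼_h π'` implies `π ∼_g π'`. -/
theorem rigid_characterisation (S : Signature) (Δ : Set S.Sym)
    (hΔ : ∀ f ∈ Δ, S.ar f = 0) (N M : Type)
    (g : TermGraph S N) (h : TermGraph S M)
    (hg : g.Reachable) (hh : h.Reachable)
    (φ : N → M) (hφ : TermGraph.IsDHom Δ g h φ) :
    TermGraph.IsRigid Δ g h φ ↔
      ∀ π ∈ g.pos, g.labAt π ∉ Δ →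
        ∀ π' ∈ h.posAcy, h.Aliases π π' → g.Aliases π π' := by
  constructor
  · intro hrig π hπg hlab π' hπ'acy hal
    obtain ⟨n, hπn⟩ := hπg
    have hn : g.lab n ∉ Δ := by rwa [Aux.labAt_eq hπn] at hlab
    obtain ⟨m, hm1, hm2⟩ := hal
    have hφπ : h.IsPos π (φ n) := Aux.hom_isPos hΔ hφ hπn
    have hmφ : m = φ n := Aux.isPos_unique hm1 hφπ
    subst hmφ
    have hmem : π' ∈ h.nodePosAcy (φ n) := ⟨hm2, hπ'acy.2⟩
    rw [← hrig n hn] at hmem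
    exact ⟨n, hπn, hmem.1⟩
  · intro cond n hn
    ext π
    simp only [TermGraph.nodePosAcy, Set.mem_setOf_eq]
    constructor
    · rintro ⟨hp, hacy⟩
      exact ⟨Aux.hom_isPos hΔ hφ hp, Aux.acy_preserved hΔ hφ cond hn hp hacy⟩
    · rintro ⟨hp, hacy⟩
      obtain ⟨π₁, hπ₁⟩ := hg n
      obtain ⟨π₀, hπ₀, hπ₀acy⟩ := Aux.exists_acyclic_pos hπ₁
      have hlab₀ : g.labAt π₀ ∉ Δ := by rw [Aux.labAt_eq hπ₀]; exact hn
      have hal : g.Aliases π₀ π :=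
        cond π₀ ⟨n, hπ₀⟩ hlab₀ π ⟨⟨φ n, hp⟩, hacy⟩
          ⟨φ n, Aux.hom_isPos hΔ hφ hπ₀, hp⟩
      obtain ⟨k, hk0, hkπ⟩ := hal
      have hkn : k = n := Aux.isPos_unique hk0 hπ₀
      subst hkn
      refine ⟨hkπ, ?_⟩
      intro π₁' π₂' m' h12 h2π p1 p2
      exact hacy π₁' π₂' (φ m') h12 h2π (Aux.hom_isPos hΔ hφ p1)
        (Aux.hom_isPos hΔ hφ p2)

end TGR
end

section
/- Labelled quotient trees are canonical representations of term graphs: every term graph g over Σ induces the labelled quotient tree (P(g), g(·), ∼_g) over Σ; and conversely, for every labelled quotient tree (P, l, ∼) over Σ there is a unique canonical term graph g over Σ whose positions are P, whose labelling satisfies g(π) = l(π) for all π ∈ P, and whose aliasing relation ∼_g equals ∼. -/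
set_option autoImplicit false

namespace TGR

section Aux

open TermGraph

variable {S : Signature} {N : Type}

theorem isPos_cases {g : TermGraph S N} {π : List ℕ} {n : N} (h : g.IsPos π n) :
    (π = [] ∧ n = g.root) ∨
    ∃ (ρ : List ℕ) (m : N) (_ : g.IsPos ρ m) (i : Fin (S.ar (g.lab m))),
      π = ρ ++ [(i : ℕ)] ∧ n = g.suc m i := by
  cases h with
  | root => exact Or.inl ⟨rfl, rfl⟩
  | step h i => exact Or.inr ⟨_, _, h, i, rfl, rfl⟩

theorem isPos_nil {g : TermGraph S N} {n : N} (h : g.IsPos [] n) : n = g.root := by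
  rcases isPos_cases h with ⟨_, hr⟩ | ⟨ρ, m, _, i, hπ, _⟩
  · exact hr
  · exact absurd hπ.symm (by simp)

theorem isPos_snoc {g : TermGraph S N} {π : List ℕ} {i : ℕ} {n : N}
    (h : g.IsPos (π ++ [i]) n) :
    ∃ (m : N) (_ : g.IsPos π m) (hi : i < S.ar (g.lab m)), n = g.suc m ⟨i, hi⟩ := by
  rcases isPos_cases h with ⟨hπ, _⟩ | ⟨ρ, m, hm, j, hπ, hn⟩
  · exact absurd hπ (by simp)
  · obtain ⟨rfl, hji⟩ := List.append_inj' hπ.symm rfl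
    obtain rfl : (j : ℕ) = i := by simpa using hji
    exact ⟨m, hm, j.isLt, by cases j; exact hn⟩

theorem isPos_unique {g : TermGraph S N} {π : List ℕ} {n m : N}
    (h1 : g.IsPos π n) (h2 : g.IsPos π m) : n = m := by
  induction π using List.reverseRecOn generalizing n m with
  | nil => rw [isPos_nil h1, isPos_nil h2]
  | append_singleton π i ih =>
      obtain ⟨a, ha, hia, rfl⟩ := isPos_snoc h1
      obtain ⟨b, hb, hib, rfl⟩ := isPos_snoc h2
      cases ih ha hb
      rfl

theorem nodeAt_eq {g : TermGraph S N} {π : List ℕ} {n : N} (h : g.IsPos π n) :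
    g.nodeAt π = n := by
  have he : ∃ n : N, g.IsPos π n := ⟨n, h⟩
  unfold TermGraph.nodeAt
  rw [dif_pos he]
  exact isPos_unique he.choose_spec h

theorem labAt_eq {g : TermGraph S N} {π : List ℕ} {n : N} (h : g.IsPos π n) :
    g.labAt π = g.lab n := by
  unfold TermGraph.labAt
  rw [nodeAt_eq h]

end Aux

namespace LQT

variable {S : Signature} (Q : LQT S)

theorem nil_mem : [] ∈ Q.P := by
  obtain ⟨π, hπ⟩ := Q.nonempty
  induction π using List.reverseRecOn with
  | nil => exact hπ
  | append_singleton ρ i ih => exact ih (Q.reach_mem ρ i hπ)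

theorem suc_mem {π : List ℕ} (hπ : π ∈ Q.P) {i : ℕ} (hi : i < S.ar (Q.l π)) :
    π ++ [i] ∈ Q.P :=
  (Q.rel_mem _ _ (Q.congr_suc π π i (Q.rel_refl π hπ) hi)).2

/-- The equivalence class of a position. -/
def cls (π : List ℕ) : Set (List ℕ) := {π' | Q.rel π π'}

theorem cls_eq {π π' : List ℕ} (h : Q.rel π π') : Q.cls π = Q.cls π' := by
  ext ρ
  exact ⟨fun hρ => Q.rel_trans _ _ _ (Q.rel_symm _ _ h) hρ,
         fun hρ => Q.rel_trans _ _ _ h hρ⟩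

theorem rel_of_cls_eq {π π' : List ℕ} (hπ : π ∈ Q.P) (h : Q.cls π = Q.cls π') :
    Q.rel π' π := by
  have : π ∈ Q.cls π' := h ▸ Q.rel_refl π hπ
  exact this

/-- The node set of the canonical term graph induced by `Q`. -/
def Nodes : Set (Set (List ℕ)) := Q.cls '' Q.P

noncomputable def rep (n : ↥Q.Nodes) : List ℕ := n.2.choose

theorem rep_mem (n : ↥Q.Nodes) : Q.rep n ∈ Q.P := n.2.choose_spec.1

theorem rep_cls (n : ↥Q.Nodes) : Q.cls (Q.rep n) = (n : Set (List ℕ)) :=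
  n.2.choose_spec.2

/-- The term graph induced by `Q`. -/
noncomputable def tgQ : TermGraph S ↥Q.Nodes where
  lab n := Q.l (Q.rep n)
  suc n i := ⟨Q.cls (Q.rep n ++ [(i : ℕ)]),
    ⟨Q.rep n ++ [(i : ℕ)], Q.suc_mem (Q.rep_mem n) i.isLt, rfl⟩⟩
  root := ⟨Q.cls [], ⟨[], Q.nil_mem, rfl⟩⟩

theorem tgQ_isPos {π : List ℕ} {n : ↥Q.Nodes} :
    Q.tgQ.IsPos π n ↔ π ∈ Q.P ∧ (n : Set (List ℕ)) = Q.cls π := by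
  constructor
  · intro h
    induction h with
    | root => exact ⟨Q.nil_mem, rfl⟩
    | @step π m h i ih =>
        obtain ⟨hπ, hm⟩ := ih
        have hrel : Q.rel π (Q.rep m) :=
          Q.rel_of_cls_eq (Q.rep_mem m) ((Q.rep_cls m).trans hm)
        have hrel' : Q.rel (Q.rep m ++ [(i : ℕ)]) (π ++ [(i : ℕ)]) :=
          Q.congr_suc _ _ _ (Q.rel_symm _ _ hrel) i.isLt
        exact ⟨(Q.rel_mem _ _ hrel').2, Q.cls_eq hrel'⟩
  · have H : ∀ π : List ℕ, π ∈ Q.P → ∀ n : ↥Q.Nodes,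
        (n : Set (List ℕ)) = Q.cls π → Q.tgQ.IsPos π n := by
      intro π
      induction π using List.reverseRecOn with
      | nil =>
          intro _ n hn
          have : n = Q.tgQ.root := Subtype.ext hn
          rw [this]
          exact TermGraph.IsPos.root
      | append_singleton π i ih =>
          intro hπ n hn
          have hπ' : π ∈ Q.P := Q.reach_mem π i hπ
          have hi : i < S.ar (Q.l π) := Q.reach_ar π i hπ
          set m : ↥Q.Nodes := ⟨Q.cls π, ⟨π, hπ', rfl⟩⟩ with hm
          have hpm : Q.tgQ.IsPos π m := ih hπ' m rfl
          have hrelπ : Q.rel π (Q.rep m) :=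
            Q.rel_of_cls_eq (Q.rep_mem m) (Q.rep_cls m)
          have hlab : Q.tgQ.lab m = Q.l π :=
            (Q.congr_lab _ _ hrelπ).symm
          have hi' : i < S.ar (Q.tgQ.lab m) := by rw [hlab]; exact hi
          have hstep := TermGraph.IsPos.step hpm ⟨i, hi'⟩
          have hsuceq : n = Q.tgQ.suc m ⟨i, hi'⟩ := by
            apply Subtype.ext
            show (n : Set (List ℕ)) = Q.cls (Q.rep m ++ [i])
            rw [hn]
            exact (Q.cls_eq (Q.congr_suc _ _ i (Q.rel_symm _ _ hrelπ) hi')).symm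
          rw [hsuceq]
          exact hstep
    exact fun h => H π h.1 n h.2

theorem tgQ_pos : Q.tgQ.pos = Q.P := by
  ext π
  constructor
  · rintro ⟨n, hn⟩
    exact ((Q.tgQ_isPos).1 hn).1
  · intro hπ
    exact ⟨⟨Q.cls π, ⟨π, hπ, rfl⟩⟩, (Q.tgQ_isPos).2 ⟨hπ, rfl⟩⟩

theorem tgQ_aliases (π π' : List ℕ) : Q.tgQ.Aliases π π' ↔ Q.rel π π' := by
  constructor
  · rintro ⟨n, h1, h2⟩
    obtain ⟨hπ, hc⟩ := (Q.tgQ_isPos).1 h1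
    obtain ⟨hπ', hc'⟩ := (Q.tgQ_isPos).1 h2
    exact Q.rel_symm _ _ (Q.rel_of_cls_eq hπ (hc.symm.trans hc'))
  · intro h
    obtain ⟨hπ, hπ'⟩ := Q.rel_mem _ _ h
    exact ⟨⟨Q.cls π, ⟨π, hπ, rfl⟩⟩, (Q.tgQ_isPos).2 ⟨hπ, rfl⟩,
      (Q.tgQ_isPos).2 ⟨hπ', Q.cls_eq h⟩⟩

theorem tgQ_labAt {π : List ℕ} (hπ : π ∈ Q.P) : Q.tgQ.labAt π = Q.l π := by
  have hn : Q.tgQ.IsPos π ⟨Q.cls π, ⟨π, hπ, rfl⟩⟩ := (Q.tgQ_isPos).2 ⟨hπ, rfl⟩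
  rw [labAt_eq hn]
  exact (Q.congr_lab _ _ (Q.rel_of_cls_eq
    (Q.rep_mem ⟨Q.cls π, ⟨π, hπ, rfl⟩⟩) (Q.rep_cls _))).symm

/-- The canonical term graph induced by `Q`. -/
noncomputable def toCTG : CTG S where
  nodes := Q.Nodes
  tg := Q.tgQ
  reach := fun n => ⟨Q.rep n, (Q.tgQ_isPos).2 ⟨Q.rep_mem n, (Q.rep_cls n).symm⟩⟩
  canon := fun n => by
    ext π
    show π ∈ (n : Set (List ℕ)) ↔ Q.tgQ.IsPos π n
    rw [Q.tgQ_isPos, ← Q.rep_cls n]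
    constructor
    · intro hπ
      exact ⟨(Q.rel_mem _ _ hπ).2, Q.cls_eq hπ⟩
    · rintro ⟨hπ, hc⟩
      exact Q.rel_of_cls_eq hπ hc.symm

end LQT

theorem termGraph_ext {S : Signature} {N : Type} {t₁ t₂ : TermGraph S N}
    (hlab : ∀ n, t₁.lab n = t₂.lab n)
    (hsuc : ∀ (n : N) (i : ℕ) (h1 : i < S.ar (t₁.lab n)) (h2 : i < S.ar (t₂.lab n)),
      t₁.suc n ⟨i, h1⟩ = t₂.suc n ⟨i, h2⟩)
    (hroot : t₁.root = t₂.root) : t₁ = t₂ := by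
  obtain ⟨lab₁, suc₁, root₁⟩ := t₁
  obtain ⟨lab₂, suc₂, root₂⟩ := t₂
  obtain rfl : lab₁ = lab₂ := funext hlab
  obtain rfl : root₁ = root₂ := hroot
  obtain rfl : suc₁ = suc₂ := by
    funext n i
    exact hsuc n i i.isLt i.isLt
  rfl

theorem ctg_node_eq {S : Signature} {Q : LQT S} {g : CTG S}
    (hrel : ∀ π π' : List ℕ, CTG.Aliases g π π' ↔ Q.rel π π')
    {n : ↥g.nodes} {π : List ℕ} (h : g.tg.IsPos π n) :
    (n : Set (List ℕ)) = Q.cls π := by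
  rw [g.canon n]
  ext π'
  show g.tg.IsPos π' n ↔ Q.rel π π'
  rw [← hrel]
  constructor
  · intro h'
    exact ⟨n, h, h'⟩
  · rintro ⟨m, hm, hm'⟩
    rwa [isPos_unique hm h] at hm'

theorem ctg_nodes_eq {S : Signature} {Q : LQT S} {g : CTG S}
    (hpos : CTG.pos g = Q.P)
    (hrel : ∀ π π' : List ℕ, CTG.Aliases g π π' ↔ Q.rel π π') :
    g.nodes = Q.Nodes := by
  ext C
  constructor
  · intro hC
    obtain ⟨π, hπ⟩ := g.reach ⟨C, hC⟩
    have hmem : π ∈ Q.P := by rw [← hpos]; exact ⟨_, hπ⟩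
    exact ⟨π, hmem, (ctg_node_eq hrel hπ).symm⟩
  · rintro ⟨π, hπ, rfl⟩
    have hmem : π ∈ CTG.pos g := by rw [hpos]; exact hπ
    obtain ⟨n, hn⟩ := hmem
    rw [← ctg_node_eq hrel hn]
    exact n.2

theorem ctg_eq {S : Signature} {Q : LQT S} {g₁ g₂ : CTG S}
    (hpos₁ : CTG.pos g₁ = Q.P) (hlab₁ : ∀ π ∈ Q.P, CTG.labAt g₁ π = Q.l π)
    (hrel₁ : ∀ π π' : List ℕ, CTG.Aliases g₁ π π' ↔ Q.rel π π')
    (hpos₂ : CTG.pos g₂ = Q.P) (hlab₂ : ∀ π ∈ Q.P, CTG.labAt g₂ π = Q.l π)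
    (hrel₂ : ∀ π π' : List ℕ, CTG.Aliases g₂ π π' ↔ Q.rel π π') : g₁ = g₂ := by
  have hA : g₁.nodes = g₂.nodes :=
    (ctg_nodes_eq hpos₁ hrel₁).trans (ctg_nodes_eq hpos₂ hrel₂).symm
  obtain ⟨A, t₁, r₁, c₁⟩ := g₁
  obtain ⟨B, t₂, r₂, c₂⟩ := g₂
  change A = B at hA
  subst hA
  have hiff : ∀ (n : ↥A) (π : List ℕ), t₁.IsPos π n ↔ t₂.IsPos π n := by
    intro n π
    constructor
    · intro h
      have : π ∈ (n : Set (List ℕ)) := by rw [c₁ n]; exact h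
      rw [c₂ n] at this
      exact this
    · intro h
      have : π ∈ (n : Set (List ℕ)) := by rw [c₂ n]; exact h
      rw [c₁ n] at this
      exact this
  have ht : t₁ = t₂ := by
    apply termGraph_ext
    · intro n
      obtain ⟨π, hπ⟩ := r₁ n
      have hπ₂ : t₂.IsPos π n := (hiff n π).1 hπ
      have hmem : π ∈ Q.P := by rw [← hpos₁]; exact ⟨n, hπ⟩
      have e1 : t₁.labAt π = Q.l π := hlab₁ π hmem
      have e2 : t₂.labAt π = Q.l π := hlab₂ π hmem
      rw [labAt_eq hπ] at e1
      rw [labAt_eq hπ₂] at e2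
      rw [e1, e2]
    · intro n i h1 h2
      obtain ⟨π, hπ⟩ := r₁ n
      have hπ₂ : t₂.IsPos π n := (hiff n π).1 hπ
      have hs1 : t₁.IsPos (π ++ [i]) (t₁.suc n ⟨i, h1⟩) := hπ.step ⟨i, h1⟩
      have hs2 : t₂.IsPos (π ++ [i]) (t₂.suc n ⟨i, h2⟩) := hπ₂.step ⟨i, h2⟩
      have hs1' : t₂.IsPos (π ++ [i]) (t₁.suc n ⟨i, h1⟩) := (hiff _ _).1 hs1
      exact isPos_unique hs1' hs2
    · have h2 : t₂.IsPos [] t₂.root := TermGraph.IsPos.root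
      have h1 : t₁.IsPos [] t₂.root := (hiff _ _).2 h2
      exact (isPos_nil h1).symm
  cases ht
  rfl

/-- Labelled quotient trees canonically represent term
graphs: every term graph `g` induces the labelled quotient tree
`(P(g), g(·), ∼_g)`, and conversely every labelled quotient tree `(P, l, ∼)`
determines a unique canonical term graph with positions `P`, labelling `l` and
aliasing relation `∼`. -/
theorem lqt_canonical (S : Signature) :
    (∀ (N : Type) (g : TermGraph S N), g.Reachable →
      ∃ Q : LQT S, Q.P = g.pos ∧ (∀ π ∈ g.pos, Q.l π = g.labAt π) ∧
        (∀ π π' : List ℕ, Q.rel π π' ↔ g.Aliases π π')) ∧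
    (∀ Q : LQT S, ∃! g : CTG S,
      CTG.pos g = Q.P ∧ (∀ π ∈ Q.P, CTG.labAt g π = Q.l π) ∧
      (∀ π π' : List ℕ, CTG.Aliases g π π' ↔ Q.rel π π')) := by
  constructor
  · intro N g _
    refine ⟨{
      P := g.pos
      nonempty := ⟨[], g.root, TermGraph.IsPos.root⟩
      l := g.labAt
      rel := g.Aliases
      rel_refl := fun π hπ => by obtain ⟨n, hn⟩ := hπ; exact ⟨n, hn, hn⟩
      rel_symm := fun π π' h => by obtain ⟨n, h1, h2⟩ := h; exact ⟨n, h2, h1⟩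
      rel_trans := fun π π' π'' h h' => by
        obtain ⟨n, h1, h2⟩ := h
        obtain ⟨m, h3, h4⟩ := h'
        rw [isPos_unique h3 h2] at h4
        exact ⟨n, h1, h4⟩
      rel_mem := fun π π' h => by
        obtain ⟨n, h1, h2⟩ := h
        exact ⟨⟨n, h1⟩, ⟨n, h2⟩⟩
      reach_mem := fun π i h => by
        obtain ⟨n, hn⟩ := h
        obtain ⟨m, hm, _, _⟩ := isPos_snoc hn
        exact ⟨m, hm⟩
      reach_ar := fun π i h => by
        obtain ⟨n, hn⟩ := h
        obtain ⟨m, hm, hi, _⟩ := isPos_snoc hn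
        rwa [labAt_eq hm]
      congr_lab := fun π π' h => by
        obtain ⟨n, h1, h2⟩ := h
        rw [labAt_eq h1, labAt_eq h2]
      congr_suc := fun π π' i h hi => by
        obtain ⟨n, h1, h2⟩ := h
        rw [labAt_eq h1] at hi
        exact ⟨g.suc n ⟨i, hi⟩, h1.step ⟨i, hi⟩, h2.step ⟨i, hi⟩⟩ }, rfl,
      fun _ _ => rfl, fun _ _ => Iff.rfl⟩
  · intro Q
    refine ⟨Q.toCTG, ⟨Q.tgQ_pos, fun π hπ => Q.tgQ_labAt hπ, Q.tgQ_aliases⟩,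
      fun g hg => ?_⟩
    exact ctg_eq hg.1 hg.2.1 hg.2.2 Q.tgQ_pos (fun π hπ => Q.tgQ_labAt hπ)
      Q.tgQ_aliases

end TGR
end
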